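/- Let G be a block graph consisting of an edge K₂ = {u₁, u₂}, where at each u_i cliques K_{m^i_1}, ..., K_{m^i_{k_i}} of orders m^i_j ≥ 3 are coalesced (sharing only the vertex u_i). Then G is nonsingular. -/

import Mathlib

open scoped Classical

/-- The block graph consisting of an edge `K₂` on vertices `0, 1`, where at vertex `i`
the cliques `K_{mf i j}` (`j < kf i`) are coalesced, each contributing `mf i j - 1`
new vertices. -/
def edgeCliquesGraph (kf : Fin 2 → ℕ) (mf : ∀ i, Fin (kf i) → ℕ) :
    SimpleGraph (Fin 2 ⊕ Σ i : Fin 2, Σ j : Fin (kf i), Fin (mf i j - 1)) :=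
  SimpleGraph.fromRel fun x y =>
    match x, y with
    | .inl _, .inl _ => True
    | .inl i, .inr p => i = p.1
    | .inr p, .inr q => p.1 = q.1 ∧ (p.2.1 : ℕ) = (q.2.1 : ℕ)
    | _, _ => False

/-- Determinant of the adjacency matrix of a graph. -/
noncomputable def gdet {V : Type} [Fintype V] (G : SimpleGraph V) : ℝ :=
  Matrix.det (Matrix.of fun i j : V => if G.Adj i j then (1 : ℝ) else 0)

/-!
Let `x` be a kernel vector of the adjacency matrix. At a non-hub vertex `t` of a clique `K_m`
coalesced at `u_i`, the equation reads `x t = x u_i + S`, where `S` is the sum of `x` over the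
`m - 1` non-hub vertices of that clique; summing gives `S = -(m - 1)/(m - 2) · x u_i`.
The equation at `u_i` then becomes `x u_{1-i} = T_i · x u_i` with
`T_i = ∑_j (m^i_j - 1)/(m^i_j - 2)`, a sum of terms `> 1`, so `T_i = 0` or `T_i > 1`.
Thus `T_0 T_1 ≠ 1`, which forces `x u_0 = x u_1 = 0`, and then `x = 0`.
-/

theorem gdet_ne_zero_of_forall_sum_adj {V : Type} [Fintype V] (G : SimpleGraph V)
    (h : ∀ x : V → ℝ, (∀ v, ∑ w, (if G.Adj v w then x w else 0) = 0) → x = 0) :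
    gdet G ≠ 0 := by
  intro hdet
  obtain ⟨x, hx0, hx⟩ := Matrix.exists_mulVec_eq_zero_iff.mpr hdet
  refine hx0 (h x fun v => ?_)
  simpa [Matrix.mulVec, dotProduct] using congrFun hx v

theorem sum_eq_neg_div_mul_of_forall_eq_add_sum {ι : Type*} [Fintype ι]
    (hcard : 2 ≤ Fintype.card ι) (u : ℝ) (c : ι → ℝ) (hc : ∀ t, c t = u + ∑ s, c s) :
    ∑ s, c s = -(Fintype.card ι / (Fintype.card ι - 1 : ℝ)) * u := by
  have hn : (2 : ℝ) ≤ Fintype.card ι := by exact_mod_cast hcard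
  have hsum : ∑ s, c s = Fintype.card ι * (u + ∑ s, c s) := by
    conv_lhs => rw [Finset.sum_congr rfl fun t _ => hc t]
    rw [Finset.sum_const, Finset.card_univ, nsmul_eq_mul]
  field_simp [show (Fintype.card ι - 1 : ℝ) ≠ 0 by linarith]
  linarith

theorem mul_ne_one_of_eq_zero_or_one_lt {a b : ℝ} (ha : a = 0 ∨ 1 < a) (hb : b = 0 ∨ 1 < b) :
    a * b ≠ 1 := by
  rcases ha with rfl | ha
  · simp
  rcases hb with rfl | hb
  · simp
  nlinarith

theorem eq_zero_and_eq_zero_of_eq_mul_of_eq_mul {a b x y : ℝ} (hab : a * b ≠ 1) (hy : y = a * x)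
    (hx : x = b * y) : x = 0 ∧ y = 0 := by
  have h : x * (1 - a * b) = 0 := by linear_combination hx + b * hy
  have hx0 : x = 0 := (mul_eq_zero.mp h).resolve_right (sub_ne_zero.mpr (Ne.symm hab))
  exact ⟨hx0, by rw [hy, hx0, mul_zero]⟩

theorem Finset.sum_eq_zero_or_one_lt_sum {ι : Type*} {s : Finset ι} {f : ι → ℝ}
    (hf : ∀ i ∈ s, 1 < f i) : ∑ i ∈ s, f i = 0 ∨ 1 < ∑ i ∈ s, f i := by
  rcases s.eq_empty_or_nonempty with rfl | ⟨i, hi⟩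
  · simp
  right
  calc 1 < f i := hf i hi
    _ ≤ ∑ i ∈ s, f i := Finset.single_le_sum (fun j hj => (one_pos.trans (hf j hj)).le) hi

namespace edgeCliquesGraph

variable {kf : Fin 2 → ℕ} {mf : ∀ i, Fin (kf i) → ℕ}

@[simp] theorem adj_inl_inl {i i' : Fin 2} :
    (edgeCliquesGraph kf mf).Adj (.inl i) (.inl i') ↔ i ≠ i' := by
  simp [edgeCliquesGraph]

@[simp] theorem adj_inl_inr {i : Fin 2} {p : Σ i : Fin 2, Σ j : Fin (kf i), Fin (mf i j - 1)} :
    (edgeCliquesGraph kf mf).Adj (.inl i) (.inr p) ↔ i = p.1 := by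
  simp [edgeCliquesGraph]

@[simp] theorem adj_inr_inl {i : Fin 2} {p : Σ i : Fin 2, Σ j : Fin (kf i), Fin (mf i j - 1)} :
    (edgeCliquesGraph kf mf).Adj (.inr p) (.inl i) ↔ i = p.1 := by
  rw [SimpleGraph.adj_comm, adj_inl_inr]

@[simp] theorem adj_inr_inr {p q : Σ i : Fin 2, Σ j : Fin (kf i), Fin (mf i j - 1)} :
    (edgeCliquesGraph kf mf).Adj (.inr p) (.inr q) ↔
      p ≠ q ∧ p.1 = q.1 ∧ (p.2.1 : ℕ) = q.2.1 := by
  simp [edgeCliquesGraph]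
  tauto

theorem sum_adj_inl (x : Fin 2 ⊕ (Σ i : Fin 2, Σ j : Fin (kf i), Fin (mf i j - 1)) → ℝ)
    (i : Fin 2) :
    ∑ w, (if (edgeCliquesGraph kf mf).Adj (.inl i) w then x w else 0) =
      (∑ i', x (.inl i') - x (.inl i)) + ∑ j, ∑ t, x (.inr ⟨i, j, t⟩) := by
  simp only [Fintype.sum_sum_type, Fintype.sum_sigma, adj_inl_inl, adj_inl_inr]
  congr 1
  · fin_cases i <;> simp [Fin.sum_univ_two]
  · rw [Fintype.sum_eq_single i fun i' hi' => by simp [Ne.symm hi']]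
    simp

theorem sum_adj_inr (x : Fin 2 ⊕ (Σ i : Fin 2, Σ j : Fin (kf i), Fin (mf i j - 1)) → ℝ)
    (i : Fin 2) (j : Fin (kf i)) (t : Fin (mf i j - 1)) :
    ∑ w, (if (edgeCliquesGraph kf mf).Adj (.inr ⟨i, j, t⟩) w then x w else 0) =
      x (.inl i) + (∑ t', x (.inr ⟨i, j, t'⟩) - x (.inr ⟨i, j, t⟩)) := by
  simp only [Fintype.sum_sum_type, Fintype.sum_sigma, adj_inr_inl, adj_inr_inr]
  congr 1
  · simp
  · rw [Fintype.sum_eq_single i fun i' hi' => by simp [Ne.symm hi'],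
      Fintype.sum_eq_single j fun j' hj' => by simp [Fin.val_ne_of_ne (Ne.symm hj')]]
    simp [Finset.sum_ite, Finset.filter_ne, Finset.sum_erase_eq_sub]

theorem eq_zero_of_forall_sum_adj_eq_zero (hm : ∀ i j, 3 ≤ mf i j)
    (x : Fin 2 ⊕ (Σ i : Fin 2, Σ j : Fin (kf i), Fin (mf i j - 1)) → ℝ)
    (hx : ∀ v, ∑ w, (if (edgeCliquesGraph kf mf).Adj v w then x w else 0) = 0) : x = 0 := by
  have hsize : ∀ i j, 2 ≤ mf i j - 1 := fun i j => by have := hm i j; omega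
  set r : ∀ i, Fin (kf i) → ℝ := fun i j =>
    (mf i j - 1 : ℕ) / ((mf i j - 1 : ℕ) - 1 : ℝ)
  have hr : ∀ i j, 1 < r i j := fun i j => by
    have : (2 : ℝ) ≤ (mf i j - 1 : ℕ) := by exact_mod_cast hsize i j
    exact (one_lt_div (by linarith)).mpr (by linarith)
  have hclique : ∀ i j t, x (.inr ⟨i, j, t⟩) = x (.inl i) + ∑ t', x (.inr ⟨i, j, t'⟩) :=
    fun i j t => by linarith [sum_adj_inr x i j t, hx (.inr ⟨i, j, t⟩)]
  have hblock : ∀ i j, ∑ t, x (.inr ⟨i, j, t⟩) = -r i j * x (.inl i) := fun i j => by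
    simpa using sum_eq_neg_div_mul_of_forall_eq_add_sum (by simpa using hsize i j) _ _
      (hclique i j)
  have hhub : ∀ i, ∑ i', x (.inl i') - x (.inl i) = (∑ j, r i j) * x (.inl i) := fun i => by
    have h := hx (.inl i)
    simp only [sum_adj_inl, hblock, neg_mul, Finset.sum_neg_distrib, ← Finset.sum_mul] at h
    linarith
  have hweights : (∑ j, r 0 j) * (∑ j, r 1 j) ≠ 1 :=
    mul_ne_one_of_eq_zero_or_one_lt (Finset.sum_eq_zero_or_one_lt_sum fun j _ => hr 0 j)
      (Finset.sum_eq_zero_or_one_lt_sum fun j _ => hr 1 j)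
  obtain ⟨hu0, hu1⟩ : x (.inl 0) = 0 ∧ x (.inl 1) = 0 :=
    eq_zero_and_eq_zero_of_eq_mul_of_eq_mul hweights
      (by simpa [Fin.sum_univ_two] using hhub 0) (by simpa [Fin.sum_univ_two] using hhub 1)
  have hu : ∀ i, x (.inl i) = 0 := by
    intro i
    fin_cases i
    exacts [hu0, hu1]
  ext (i | ⟨i, j, t⟩)
  · exact hu i
  · simp [hclique i j t, hblock, hu]

end edgeCliquesGraph

theorem stmt_18_general (kf : Fin 2 → ℕ) (mf : ∀ i, Fin (kf i) → ℕ)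
    (hm : ∀ i j, 3 ≤ mf i j) :
    gdet (edgeCliquesGraph kf mf) ≠ 0 :=
  gdet_ne_zero_of_forall_sum_adj _ (edgeCliquesGraph.eq_zero_of_forall_sum_adj_eq_zero hm)

/-- A block graph consisting of an edge with cliques of order at least 3 coalesced at each
of its two endpoints is nonsingular. -/
theorem stmt_18 (kf : Fin 2 → ℕ) (mf : ∀ i, Fin (kf i) → ℕ)
    (hk : ∀ i, 1 ≤ kf i) (hm : ∀ i j, 3 ≤ mf i j) :
    gdet (edgeCliquesGraph kf mf) ≠ 0 :=
  stmt_18_general kf mf hm
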